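/- Let (s,t) be an edge with s<t. Suppose an execution contains configurations L_0 and L_1 with L_0 ↦* L_1 such that: s executes at least one t-rule in some transition occurring before L_0; r_{st} = (You,0) in L_0; and (p_s, m_s) = (t,2) in L_1. Then s executes a t-Increase that sets m_s to 2 in some transition occurring between L_0 and L_1. -/

import Mathlib

/-!
Formal model of the self-stabilizing maximal-matching algorithm in the
link-register model under read/write atomicity.

Nodes form a finite simple graph `G` on a vertex type `V` whose linear order
plays the role of the distinct identifiers.  A configuration records, for each
node `u`, its pointer `p u : Option V` (`none` = null), its lock variable
`m u : Fin 3`, and for each (directed) link a register `r u v : RegFlag × Fin 3`.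
-/

inductive RegFlag where
  | Idle | You | Other
deriving DecidableEq

abbrev RegVal : Type := RegFlag × Fin 3

inductive Rule (V : Type) where
  | write (a : V)
  | seduction (a : V)
  | marriage (a : V)
  | increase
  | reset
deriving DecidableEq

structure Config (V : Type) where
  p : V → Option V
  m : V → Fin 3
  r : V → V → RegVal

variable {V : Type}

def correctRegisterValue [DecidableEq V] (C : Config V) (u a : V) : RegVal :=
  match C.p u with
  | none => (RegFlag.Idle, 0)
  | some b => if b = a then (RegFlag.You, C.m u) else (RegFlag.Other, C.m u)

def PRabandonment [LinearOrder V] (C : Config V) (u : V) : Prop :=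
  ∃ v, C.p u = some v ∧
    (((C.r v u).1 ≠ RegFlag.You ∧ (v < u ∨ C.m u ≠ 0)) ∨
     (C.r v u = (RegFlag.Other, 2) ∧ u < v))

def PRreset [LinearOrder V] (C : Config V) (u : V) : Prop :=
  ∃ v, C.p u = some v ∧ (C.r v u).1 = RegFlag.You ∧
    ((C.m u = 0 ∧ (C.r v u).2 = 2) ∨
     (C.m u = 2 ∧ (C.r v u).2 = 0) ∨
     (C.m u = 0 ∧ (C.r v u).2 = 1 ∧ v < u) ∨
     (C.m u = 1 ∧ (C.r v u).2 = 0 ∧ u < v) ∨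
     (C.m u = 1 ∧ (C.r v u).2 = 2 ∧ u < v) ∨
     (C.m u = 2 ∧ (C.r v u).2 = 1 ∧ v < u))

/-- The guard of each rule of node `u` in configuration `C`. -/
def eligible [LinearOrder V] (G : SimpleGraph V) (C : Config V) (u : V) : Rule V → Prop
  | .write a => G.Adj u a ∧ C.r u a ≠ correctRegisterValue C u a
  | .seduction a => G.Adj u a ∧ C.p u = none ∧ C.r u a = correctRegisterValue C u a ∧
      C.r a u = (RegFlag.Idle, 0) ∧ u < a
  | .marriage a => G.Adj u a ∧ C.p u = none ∧ C.r u a = correctRegisterValue C u a ∧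
      C.r a u = (RegFlag.You, 0) ∧ a < u
  | .increase => ∃ v, C.p u = some v ∧ C.r u v = correctRegisterValue C u v ∧
      (C.r v u).1 = RegFlag.You ∧
      ((C.m u = 0 ∧ ((u < v ∧ (C.r v u).2 = 1) ∨ (v < u ∧ (C.r v u).2 = 0))) ∨
       (C.m u = 1 ∧ ((u < v ∧ (C.r v u).2 = 1) ∨ (v < u ∧ (C.r v u).2 = 2))))
  | .reset => ∃ v, C.p u = some v ∧ C.r u v = correctRegisterValue C u v ∧
      (PRabandonment C u ∨ PRreset C u)

/-- Simultaneous application of (at most) one rule per node.  `A u = some R`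
means node `u` executes rule `R`; each action only modifies the data owned by
the acting node. -/
def step [DecidableEq V] (C : Config V) (A : V → Option (Rule V)) : Config V where
  p u :=
    match A u with
    | some (Rule.seduction a) => some a
    | some (Rule.marriage a) => some a
    | some Rule.reset => none
    | _ => C.p u
  m u :=
    match A u with
    | some (Rule.seduction _) => 0
    | some (Rule.marriage _) => 0
    | some Rule.reset => 0
    | some Rule.increase => C.m u + 1
    | _ => C.m u
  r u a :=
    match A u with
    | some (Rule.write b) => if a = b then correctRegisterValue C u a else C.r u a
    | _ => C.r u a

/-- An execution `C_0, A_0, C_1, A_1, …, C_T`: at each transition `i < T`, a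
nonempty set of eligible rules (at most one per node) is executed
simultaneously. -/
structure Execution [LinearOrder V] (G : SimpleGraph V) where
  T : ℕ
  conf : ℕ → Config V
  act : ℕ → V → Option (Rule V)
  act_nonempty : ∀ i < T, ∃ u, (act i u).isSome
  act_eligible : ∀ i < T, ∀ u R, act i u = some R → eligible G (conf i) u R
  conf_succ : ∀ i < T, conf (i + 1) = step (conf i) (act i)

/-- A configuration is stable if no rule is eligible at any node. -/
def stableConfig [LinearOrder V] (G : SimpleGraph V) (C : Config V) : Prop :=
  ∀ u R, ¬ eligible G C u R

/-- The edge `(s,t)` (with `s < t` intended) is in state `(You, α, β)`. -/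
def edgeState (C : Config V) (s t : V) (α β : Fin 3) : Prop :=
  C.p s = some t ∧ C.p t = some s ∧ C.m s = α ∧ C.m t = β

def updatedCorrectState (C : Config V) (s t : V) (α β : Fin 3) : Prop :=
  edgeState C s t α β ∧ C.r s t = (RegFlag.You, α) ∧ C.r t s = (RegFlag.You, β) ∧
    ((α, β) = ((0 : Fin 3), (0 : Fin 3)) ∨ (α, β) = (0, 1) ∨ (α, β) = (1, 1) ∨
     (α, β) = (2, 1) ∨ (α, β) = (2, 2))

def toUpdateCorrectState (C : Config V) (s t : V) (α β : Fin 3) : Prop :=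
  edgeState C s t α β ∧
    ((((α, β) = ((0 : Fin 3), (1 : Fin 3)) ∨ (α, β) = (2, 2)) ∧
        C.r s t = (RegFlag.You, α) ∧ C.r t s = (RegFlag.You, β - 1)) ∨
     (((α, β) = ((1 : Fin 3), (1 : Fin 3)) ∨ (α, β) = (2, 1)) ∧
        C.r s t = (RegFlag.You, α - 1) ∧ C.r t s = (RegFlag.You, β)))

def correctState (C : Config V) (s t : V) (α β : Fin 3) : Prop :=
  updatedCorrectState C s t α β ∨ toUpdateCorrectState C s t α β

/-- Node `u` executes a `v`-rule in transition `k`: one of `Write(v)`,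
`Seduction(v)`, `Marriage(v)`, a `v`-`Increase` or a `v`-`Reset`. -/
def execVRule [LinearOrder V] {G : SimpleGraph V} (E : Execution G) (k : ℕ) (u v : V) : Prop :=
  k < E.T ∧
    (E.act k u = some (Rule.write v) ∨ E.act k u = some (Rule.seduction v) ∨
     E.act k u = some (Rule.marriage v) ∨
     ((E.act k u = some Rule.increase ∨ E.act k u = some Rule.reset) ∧
       (E.conf k).p u = some v))

/-!
Once `s` has executed a `t`-rule, the invariant "`r_{st} = (You,0)` implies `(p_s, m_s) ≠ (t,2)`"
holds forever: a `Write(t)` copies `m_s` into `r_{st}`, `Seduction`, `Marriage` and `Reset` zero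
`m_s`, and an `Increase` to `2` requires `r_{st} = (You,1)`. So in `L_0` we have
`(p_s, m_s) ≠ (t,2)`, and the only action reaching `m_s = 2` without changing `p_s` is `Increase`.
-/

def Config.RegYouZeroExcludesTwo (C : Config V) (s t : V) : Prop :=
  C.r s t = (RegFlag.You, 0) → C.p s = some t → C.m s ≠ 2

section Step

variable [DecidableEq V] {C : Config V} {A : V → Option (Rule V)} {u : V}

lemma step_p_eq_and_of_step_m_eq_two (hm : (step C A).m u = 2) :
    (step C A).p u = C.p u ∧ (C.m u = 2 ∨ A u = some .increase) := by
  cases hA : A u with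
  | none => simp_all [step]
  | some R => cases R <;> simp_all [step]

lemma step_p_eq_of_act_eq_increase (hA : A u = some .increase) : (step C A).p u = C.p u := by
  simp [step, hA]

end Step

section Invariant

variable [LinearOrder V] {G : SimpleGraph V} {C : Config V} {A : V → Option (Rule V)} {s t : V}

lemma Config.regYouZeroExcludesTwo_step_of_act {R : Rule V} (hA : A s = some R)
    (hel : eligible G C s R) (hR : ∀ a, R = .write a → a = t) :
    (step C A).RegYouZeroExcludesTwo s t := by
  intro hr hp
  cases R with
  | write a =>
    obtain rfl := hR a rfl
    simp only [step, hA, if_true] at hr hp ⊢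
    simp_all [correctRegisterValue]
  | increase =>
    obtain ⟨v, hpv, hrv, -⟩ := hel
    simp only [step, hA] at hr hp ⊢
    obtain rfl : v = t := Option.some.inj (hpv.symm.trans hp)
    have hm0 : C.m s = 0 := by simp_all [correctRegisterValue]
    simp [hm0]
  | seduction | marriage | reset => simp [step, hA] at hp ⊢

lemma Config.regYouZeroExcludesTwo_step (h : C.RegYouZeroExcludesTwo s t)
    (hel : ∀ R, A s = some R → eligible G C s R) :
    (step C A).RegYouZeroExcludesTwo s t := by
  cases hA : A s with
  | none => simpa [Config.RegYouZeroExcludesTwo, step, hA] using h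
  | some R =>
    by_cases hR : ∀ a, R = .write a → a = t
    · exact regYouZeroExcludesTwo_step_of_act hA (hel R hA) hR
    · obtain ⟨a, rfl, hat⟩ : ∃ a, R = .write a ∧ a ≠ t := by simpa using hR
      simpa [Config.RegYouZeroExcludesTwo, step, hA, Ne.symm hat] using h

end Invariant

namespace Execution

variable [LinearOrder V] {G : SimpleGraph V} (E : Execution G)

lemma regYouZeroExcludesTwo_of_execVRule {s t : V} {k l : ℕ} (hk : execVRule E k s t)
    (hkl : k + 1 ≤ l) (hlT : l ≤ E.T) : (E.conf l).RegYouZeroExcludesTwo s t := by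
  induction l, hkl using Nat.le_induction with
  | base =>
    obtain ⟨hkT, hact⟩ := hk
    rw [E.conf_succ k hkT]
    have hel := E.act_eligible k hkT s
    rcases hact with h | h | h | ⟨h | h, -⟩ <;>
      exact Config.regYouZeroExcludesTwo_step_of_act h (hel _ h) (by simp)
  | succ l _ ih =>
    rw [E.conf_succ l hlT]
    exact Config.regYouZeroExcludesTwo_step (ih (by omega)) (E.act_eligible l hlT s)

lemma exists_increase_of_reach_two {u v : V} {i l : ℕ} (hil : i ≤ l) (hlT : l ≤ E.T)
    (hi : ¬((E.conf i).p u = some v ∧ (E.conf i).m u = 2))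
    (hp : (E.conf l).p u = some v) (hm : (E.conf l).m u = 2) :
    ∃ k, i ≤ k ∧ k + 1 ≤ l ∧ E.act k u = some .increase ∧
      (E.conf k).p u = some v ∧ (E.conf (k + 1)).m u = 2 := by
  induction l, hil using Nat.le_induction with
  | base => exact absurd ⟨hp, hm⟩ hi
  | succ l hil ih =>
    have hsucc := E.conf_succ l hlT
    rw [hsucc] at hp
    obtain ⟨hpl, hml | hinc⟩ := step_p_eq_and_of_step_m_eq_two (hsucc ▸ hm)
    · obtain ⟨k, hik, hkl, hk⟩ := ih (by omega) (hpl ▸ hp) hml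
      exact ⟨k, hik, by omega, hk⟩
    · exact ⟨l, hil, le_rfl, hinc, step_p_eq_of_act_eq_increase hinc ▸ hp, hm⟩

end Execution

theorem stmt_13_general {V : Type} [LinearOrder V] (G : SimpleGraph V)
    (s t : V) (E : Execution G)
    (i j : ℕ) (hij : i ≤ j) (hjT : j ≤ E.T)
    (hpre : ∃ k, k + 1 ≤ i ∧ execVRule E k s t)
    (hL0 : (E.conf i).r s t = (RegFlag.You, 0))
    (hL1p : (E.conf j).p s = some t) (hL1m : (E.conf j).m s = 2) :
    ∃ k, i ≤ k ∧ k + 1 ≤ j ∧ E.act k s = some Rule.increase ∧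
      (E.conf k).p s = some t ∧ (E.conf (k + 1)).m s = 2 := by
  obtain ⟨k, hki, hk⟩ := hpre
  have hinv := E.regYouZeroExcludesTwo_of_execVRule hk hki (hij.trans hjT)
  exact E.exists_increase_of_reach_two hij hjT (fun ⟨hp, hm⟩ => hinv hL0 hp hm) hL1p hL1m

/-- If `s` executed at least one `t`-rule before `L_0 =
conf i`, `r_{st} = (You,0)` in `L_0`, and `(p_s,m_s) = (t,2)` in `L_1 = conf j`
(with `L_0 ↦* L_1`), then `s` executes a `t`-`Increase` setting `m_s = 2`
between `L_0` and `L_1`. -/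
theorem stmt_13 {V : Type} [Fintype V] [LinearOrder V] (G : SimpleGraph V)
    (s t : V) (hadj : G.Adj s t) (hst : s < t) (E : Execution G)
    (i j : ℕ) (hij : i ≤ j) (hjT : j ≤ E.T)
    (hpre : ∃ k, k + 1 ≤ i ∧ execVRule E k s t)
    (hL0 : (E.conf i).r s t = (RegFlag.You, 0))
    (hL1p : (E.conf j).p s = some t) (hL1m : (E.conf j).m s = 2) :
    ∃ k, i ≤ k ∧ k + 1 ≤ j ∧ E.act k s = some Rule.increase ∧
      (E.conf k).p s = some t ∧ (E.conf (k + 1)).m s = 2 :=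
  stmt_13_general G s t E i j hij hjT hpre hL0 hL1p hL1m
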